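/- Let P and Q be real polynomials with deg P ≤ 2·deg Q + 1 and let γ > 0. Then the derivative of the regularized rational unit is uniformly bounded: there exists a constant C (depending on P, Q, and γ) such that |R'(x)| ≤ C for all x ∈ ℝ, and consequently R is globally Lipschitz continuous on ℝ. -/

import Mathlib

open Polynomial Filter Topology

private lemma aux_deg_comp_neg (p : Polynomial ℝ) :
    (p.comp (-X)).degree = p.degree := by
  by_cases hp : p = 0
  · simp [hp]
  have hne : p.comp (-X) ≠ 0 := by
    intro hcz
    rw [Polynomial.comp_eq_zero_iff] at hcz
    rcases hcz with h | ⟨_, h⟩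
    · exact hp h
    · have := congrArg (fun q : Polynomial ℝ => q.coeff 1) h
      simp at this
  have hnat : (p.comp (-X)).natDegree = p.natDegree := by
    rw [Polynomial.natDegree_comp]
    have : (-X : Polynomial ℝ).natDegree = 1 := by
      simp [Polynomial.natDegree_neg]
    rw [this, mul_one]
  rw [Polynomial.degree_eq_natDegree hp, Polynomial.degree_eq_natDegree hne, hnat]

private lemma aux_tendsto_atTop (N M : Polynomial ℝ) (h : N.degree ≤ M.degree) :
    ∃ l : ℝ, Tendsto (fun x => N.eval x / M.eval x) atTop (𝓝 l) := by
  rcases h.lt_or_eq with h | h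
  · exact ⟨0, Polynomial.div_tendsto_zero_of_degree_lt N M h⟩
  · exact ⟨_, Polynomial.div_tendsto_leadingCoeff_div_of_degree_eq N M h⟩

private lemma aux_tendsto_atBot (N M : Polynomial ℝ) (h : N.degree ≤ M.degree) :
    ∃ l : ℝ, Tendsto (fun x => N.eval x / M.eval x) atBot (𝓝 l) := by
  have h' : (N.comp (-X)).degree ≤ (M.comp (-X)).degree := by
    rw [aux_deg_comp_neg, aux_deg_comp_neg]; exact h
  obtain ⟨l, hl⟩ := aux_tendsto_atTop _ _ h'
  refine ⟨l, ?_⟩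
  have := hl.comp tendsto_neg_atBot_atTop
  simpa [Function.comp_def, Polynomial.eval_comp] using this

/-- A ratio of polynomials with nowhere-vanishing denominator and no larger numerator
degree is globally bounded. -/
private lemma aux_bounded (N M : Polynomial ℝ) (h : N.degree ≤ M.degree)
    (hM : ∀ x : ℝ, M.eval x ≠ 0) :
    ∃ C : ℝ, ∀ x : ℝ, |N.eval x / M.eval x| ≤ C := by
  set f : ℝ → ℝ := fun x => N.eval x / M.eval x with hf
  obtain ⟨l₁, h₁⟩ := aux_tendsto_atTop N M h
  obtain ⟨l₂, h₂⟩ := aux_tendsto_atBot N M h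
  have hcont : Continuous f := by
    exact (Polynomial.continuous N).div (Polynomial.continuous M) hM
  have e₁ : ∀ᶠ x in atTop, |f x| ≤ |l₁| + 1 := by
    have := h₁.abs.eventually (eventually_le_nhds (by linarith [abs_nonneg l₁] : |l₁| < |l₁| + 1))
    exact this
  have e₂ : ∀ᶠ x in atBot, |f x| ≤ |l₂| + 1 := by
    have := h₂.abs.eventually (eventually_le_nhds (by linarith [abs_nonneg l₂] : |l₂| < |l₂| + 1))
    exact this
  obtain ⟨A, hA⟩ := eventually_atTop.1 e₁
  obtain ⟨B, hB⟩ := eventually_atBot.1 e₂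
  obtain ⟨C₀, hC₀⟩ := (isCompact_Icc (a := B) (b := A)).exists_bound_of_continuousOn
    hcont.continuousOn
  refine ⟨max (max (|l₁| + 1) (|l₂| + 1)) C₀, fun x => ?_⟩
  rcases le_total A x with hx | hx
  · exact le_trans (hA x hx) (le_max_of_le_left (le_max_left _ _))
  rcases le_total x B with hx' | hx'
  · exact le_trans (hB x hx') (le_max_of_le_left (le_max_right _ _))
  · have := hC₀ x ⟨hx', hx⟩
    rw [Real.norm_eq_abs] at this
    exact this.trans (le_max_right _ _)

/-- Gradient boundedness of the CFNN-Hybrid rational unit: if `deg P ≤ 2 deg Q + 1`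
and `γ > 0`, then the derivative of `R(x) = P(x)/(Q(x)^2 + γ)` is uniformly bounded on
`ℝ`, and consequently `R` is globally Lipschitz continuous on `ℝ`. -/
theorem stmt_4 (P Q : Polynomial ℝ) (γ : ℝ) (hγ : 0 < γ)
    (hdeg : P.natDegree ≤ 2 * Q.natDegree + 1) :
    ∃ C : ℝ,
      (∀ x : ℝ, |deriv (fun x : ℝ => P.eval x / (Q.eval x ^ 2 + γ)) x| ≤ C) ∧
      ∃ K : NNReal, LipschitzWith K (fun x : ℝ => P.eval x / (Q.eval x ^ 2 + γ)) := by
  set D : Polynomial ℝ := Q ^ 2 + C γ with hD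
  have hDval : ∀ x : ℝ, D.eval x = Q.eval x ^ 2 + γ := by intro x; simp [hD]
  have hDpos : ∀ x : ℝ, 0 < D.eval x := by
    intro x; rw [hDval]; positivity
  have hDne : ∀ x : ℝ, D.eval x ≠ 0 := fun x => (hDpos x).ne'
  set N : Polynomial ℝ := P.derivative * D - P * D.derivative with hN
  set M : Polynomial ℝ := D ^ 2 with hM
  -- derivative of R
  have hder : ∀ x : ℝ, HasDerivAt (fun x : ℝ => P.eval x / (Q.eval x ^ 2 + γ))
      (N.eval x / M.eval x) x := by
    intro x
    have h1 : HasDerivAt (fun x : ℝ => P.eval x) (P.derivative.eval x) x := P.hasDerivAt x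
    have h2 : HasDerivAt (fun x : ℝ => D.eval x) (D.derivative.eval x) x := D.hasDerivAt x
    have h2' : HasDerivAt (fun x : ℝ => Q.eval x ^ 2 + γ) (D.derivative.eval x) x := by
      simpa [hDval] using h2
    have := h1.div h2' (by rw [← hDval]; exact hDne x)
    change HasDerivAt (fun x : ℝ => P.eval x / (Q.eval x ^ 2 + γ)) _ x at this
    convert this using 1
    simp only [hN, hM, Polynomial.eval_sub, Polynomial.eval_mul, Polynomial.eval_pow, hDval x]
  -- degree bound
  have hdegD : D.natDegree ≤ 2 * Q.natDegree := by
    calc D.natDegree ≤ max (Q ^ 2).natDegree (C γ).natDegree := Polynomial.natDegree_add_le _ _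
    _ ≤ 2 * Q.natDegree := by simp [Polynomial.natDegree_pow]
  have hM0 : M ≠ 0 := fun h => by
    have := hDne 0
    simp only [hM] at h
    exact this (pow_eq_zero_iff (n := 2) (by norm_num) |>.1 (by rw [← Polynomial.eval_pow, h, Polynomial.eval_zero]) |> fun h' => h')
  have hnat : N.natDegree ≤ M.natDegree := by
    have hMnat : M.natDegree = 2 * D.natDegree := by
      rw [hM, Polynomial.natDegree_pow]
    have hPd : P.derivative.natDegree ≤ P.natDegree - 1 := Polynomial.natDegree_derivative_le P
    have h1 : (P.derivative * D).natDegree ≤ P.derivative.natDegree + D.natDegree :=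
      Polynomial.natDegree_mul_le
    have hsub : N.natDegree ≤ max (P.derivative * D).natDegree (P * D.derivative).natDegree :=
      Polynomial.natDegree_sub_le _ _
    rw [hMnat]
    refine hsub.trans (max_le ?_ ?_)
    · -- first term
      by_cases hQ0 : Q.natDegree = 0
      · have hDd0 : D.natDegree = 0 := le_antisymm (by omega) (Nat.zero_le _)
        omega
      · have hDd : D.natDegree = 2 * Q.natDegree := by
          have hQne : Q ≠ 0 := fun h => hQ0 (by simp [h])
          have hlt : (Polynomial.C γ).degree < (Q ^ 2).degree := by
            refine lt_of_le_of_lt Polynomial.degree_C_le ?_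
            rw [Polynomial.degree_eq_natDegree (pow_ne_zero 2 hQne), Polynomial.natDegree_pow]
            exact_mod_cast Nat.pos_of_ne_zero (by omega)
          have := Polynomial.natDegree_eq_of_degree_eq
            (Polynomial.degree_add_eq_left_of_degree_lt hlt)
          rw [hD, this, Polynomial.natDegree_pow]
        omega
    · -- second term
      have h2 : (P * D.derivative).natDegree ≤ P.natDegree + D.derivative.natDegree :=
        Polynomial.natDegree_mul_le
      have hDd' : D.derivative.natDegree ≤ D.natDegree - 1 := Polynomial.natDegree_derivative_le D
      by_cases hQ0 : Q.natDegree = 0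
      · -- D is a constant, so its derivative is zero
        obtain ⟨c, hc⟩ := Polynomial.natDegree_eq_zero.1 hQ0
        have : D.derivative = 0 := by
          rw [hD, ← hc]
          simp [Polynomial.derivative_pow]
        rw [this, mul_zero, Polynomial.natDegree_zero]
        exact Nat.zero_le _
      · have hDd : D.natDegree = 2 * Q.natDegree := by
          have hQne : Q ≠ 0 := fun h => hQ0 (by simp [h])
          have hlt : (Polynomial.C γ).degree < (Q ^ 2).degree := by
            refine lt_of_le_of_lt Polynomial.degree_C_le ?_
            rw [Polynomial.degree_eq_natDegree (pow_ne_zero 2 hQne), Polynomial.natDegree_pow]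
            exact_mod_cast Nat.pos_of_ne_zero (by omega)
          have := Polynomial.natDegree_eq_of_degree_eq
            (Polynomial.degree_add_eq_left_of_degree_lt hlt)
          rw [hD, this, Polynomial.natDegree_pow]
        omega
  have hdegNM : N.degree ≤ M.degree :=
    (Polynomial.degree_le_natDegree).trans
      ((Polynomial.degree_eq_natDegree hM0) ▸ (by exact_mod_cast hnat))
  obtain ⟨C₁, hC₁⟩ := aux_bounded N M hdegNM
    (fun x => by simp only [hM, Polynomial.eval_pow]; exact pow_ne_zero 2 (hDne x))
  have hderiv_eq : ∀ x : ℝ, deriv (fun x : ℝ => P.eval x / (Q.eval x ^ 2 + γ)) x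
      = N.eval x / M.eval x := fun x => (hder x).deriv
  refine ⟨C₁, fun x => by rw [hderiv_eq]; exact hC₁ x, C₁.toNNReal, ?_⟩
  apply lipschitzWith_of_nnnorm_deriv_le (fun x => (hder x).differentiableAt)
  intro x
  rw [← NNReal.coe_le_coe]
  rw [coe_nnnorm, Real.norm_eq_abs, hderiv_eq, Real.coe_toNNReal']
  exact le_max_of_le_left (hC₁ x)
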